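/- Paraconsistency and nonmonotonicity of four-valued minimal entailment with 𝓘 = {b}: for distinct atoms p and q and Γ = {p, ¬(p∧¬q)}, it holds that (i) Γ ⊭_F q (q is not an F-consequence of Γ), (ii) Γ ⊨^{b}_F q, and (iii) Γ ∪ {¬q} ⊭^{b}_F q; in particular, ⊨^{b}_F is nonmonotonic. -/

import Mathlib

/-- Truth values of the four-valued logic F: f, n, b, t, where in the truth
order f is least, t is greatest, and n, b are incomparable. -/
inductive V4 : Type
  | f | n | b | t
deriving DecidableEq, Repr

namespace V4

/-- Negation: f ↦ t, t ↦ f, and n, b are fixed. -/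
def negv : V4 → V4
  | .f => .t
  | .t => .f
  | .n => .n
  | .b => .b

/-- Conjunction: the meet with respect to the truth order (f least, t
greatest, n and b incomparable, so the meet of n and b is f). -/
def conjv : V4 → V4 → V4
  | .t, y => y
  | .f, _ => .f
  | .n, .t => .n
  | .n, .n => .n
  | .n, .b => .f
  | .n, .f => .f
  | .b, .t => .b
  | .b, .b => .b
  | .b, .n => .f
  | .b, .f => .f

/-- Implication: `x ⊃ y` is `y` if `x` is designated (b or t), and `t`
otherwise. -/
def impv : V4 → V4 → V4
  | .b, y => y
  | .t, y => y
  | .f, _ => .t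
  | .n, _ => .t

end V4

/-- Formulas of the four-valued logic F, with atoms indexed by ℕ, the
constants B and N, negation, conjunction, and implication. -/
inductive FForm : Type
  | atom : ℕ → FForm
  | bb : FForm
  | nn : FForm
  | neg : FForm → FForm
  | conj : FForm → FForm → FForm
  | imp : FForm → FForm → FForm
deriving DecidableEq

namespace FForm

/-- The valuation of F extending an interpretation `I : ℕ → V4`. -/
def val (I : ℕ → V4) : FForm → V4
  | atom p => I p
  | bb => .b
  | nn => .n
  | neg φ => (φ.val I).negv
  | conj φ ψ => (φ.val I).conjv (ψ.val I)
  | imp φ ψ => (φ.val I).impv (ψ.val I)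

/-- `I` is an F-model of `φ`: `v_I(φ)` is designated, i.e. b or t. -/
def IsModel (I : ℕ → V4) (φ : FForm) : Prop := φ.val I = .b ∨ φ.val I = .t

/-- `I` is an F-model of the theory `Γ`. -/
def IsModelSet (I : ℕ → V4) (Γ : Set FForm) : Prop := ∀ φ ∈ Γ, IsModel I φ

end FForm

/-- `Γ ⊨_F Δ`: every F-model of `Γ` is an F-model of some member of `Δ`. -/
def FEntails (Γ Δ : Set FForm) : Prop :=
  ∀ I, FForm.IsModelSet I Γ → ∃ δ ∈ Δ, FForm.IsModel I δ

/-- `I` is an F-model of `Γ` that is most consistent relative to `𝓘 ⊆ V4`: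
no F-model `J` of `Γ` makes a strictly smaller set of atoms take a value
in `𝓘`. -/
def FMostConsistentModel (𝓘 : Set V4) (I : ℕ → V4) (Γ : Set FForm) : Prop :=
  FForm.IsModelSet I Γ ∧
    ¬ ∃ J : ℕ → V4, FForm.IsModelSet J Γ ∧ {p : ℕ | J p ∈ 𝓘} ⊂ {p : ℕ | I p ∈ 𝓘}

/-- `Γ ⊨^𝓘_F Δ`: every F-model of `Γ` most consistent relative to `𝓘` is an
F-model of some member of `Δ`. -/
def FMinEntails (𝓘 : Set V4) (Γ Δ : Set FForm) : Prop :=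
  ∀ I, FMostConsistentModel 𝓘 I Γ → ∃ δ ∈ Δ, FForm.IsModel I δ

/-!
The models of `Γ = {p, ¬(p ∧ ¬q)}` are exactly the interpretations with `p ↦ b`, or with `p ↦ t`
and `q` designated; so a model of `Γ` refuting `q` makes `p` inconsistent. Setting `p` and `q`
to `t` in it gives a model of `Γ` with strictly fewer inconsistent atoms, hence every
`{b}`-most consistent model of `Γ` satisfies `q`. Adding `¬q` changes this: every model of
`Γ ∪ {¬q}` makes `p` or `q` inconsistent, so the interpretation `p ↦ b`, everything else `↦ f`,
whose only inconsistent atom is `p`, is a `{b}`-most consistent model of `Γ ∪ {¬q}` refuting `q`.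
-/

open Function

namespace FForm

theorem isModelSet_union {I : ℕ → V4} {Γ Δ : Set FForm} :
    IsModelSet I (Γ ∪ Δ) ↔ IsModelSet I Γ ∧ IsModelSet I Δ := by
  simp only [IsModelSet, Set.mem_union, or_imp, forall_and]

theorem isModel_neg_atom_iff {I : ℕ → V4} {q : ℕ} :
    IsModel I (neg (atom q)) ↔ I q = .f ∨ I q = .b := by
  simp only [IsModel, val]
  cases I q <;> decide

theorem isModelSet_pair_iff {I : ℕ → V4} {p q : ℕ} :
    IsModelSet I {atom p, neg (conj (atom p) (neg (atom q)))} ↔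
      I p = .b ∨ I p = .t ∧ (I q = .b ∨ I q = .t) := by
  simp only [IsModelSet, Set.mem_insert_iff, Set.mem_singleton_iff, forall_eq_or_imp, forall_eq,
    IsModel, val]
  cases I p <;> cases I q <;> decide

theorem isModelSet_pair_union_neg_atom {I : ℕ → V4} {p q : ℕ}
    (hI : IsModelSet I ({atom p, neg (conj (atom p) (neg (atom q)))} ∪ {neg (atom q)})) :
    I p = .b ∨ I q = .b := by
  rw [isModelSet_union, isModelSet_pair_iff] at hI
  have hq := isModel_neg_atom_iff.1 (hI.2 _ rfl)
  cases hI.1 <;> cases hq <;> simp_all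

end FForm

open FForm

theorem setOf_update_mem_subset {α β : Type*} [DecidableEq α] (f : α → β) (s : Set β) (a : α)
    {v : β} (hv : v ∉ s) : {x | update f a v x ∈ s} ⊆ {x | f x ∈ s} := by
  intro x hx
  rcases eq_or_ne x a with rfl | hxa
  · simp_all
  · simpa [update_of_ne hxa] using hx

theorem setOf_update_mem_ssubset {α β : Type*} [DecidableEq α] {f : α → β} {s : Set β} {a : α}
    {v : β} (hv : v ∉ s) (ha : f a ∈ s) : {x | update f a v x ∈ s} ⊂ {x | f x ∈ s} :=
  Set.ssubset_iff_subset_ne.2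
    ⟨setOf_update_mem_subset f s a hv, fun h => hv (by simpa using h.symm.subset ha)⟩

theorem fMostConsistentModel_of_setOf_eq_singleton {𝓘 : Set V4} {I : ℕ → V4} {Γ : Set FForm}
    {p : ℕ} (hI : IsModelSet I Γ) (hIp : {r | I r ∈ 𝓘} = {p})
    (hΓ : ∀ J, IsModelSet J Γ → ∃ r, J r ∈ 𝓘) : FMostConsistentModel 𝓘 I Γ := by
  refine ⟨hI, fun ⟨J, hJ, hJI⟩ => ?_⟩
  rw [hIp, Set.ssubset_singleton_iff] at hJI
  obtain ⟨r, hr⟩ := hΓ J hJ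
  exact hJI.subset hr

theorem fMinEntails_b_pair (p q : ℕ) :
    FMinEntails {V4.b} {atom p, neg (conj (atom p) (neg (atom q)))} {atom q} := by
  rintro I ⟨hI, hmin⟩
  refine ⟨_, rfl, ?_⟩
  by_contra hq
  have hIp : I p = .b := by
    rcases isModelSet_pair_iff.1 hI with hp | ⟨-, hq'⟩
    · exact hp
    · exact absurd hq' hq
  refine hmin ⟨update (update I p .t) q .t, ?_, ?_⟩
  · rw [isModelSet_pair_iff]
    right
    simp [update_apply]
  · exact (setOf_update_mem_subset _ _ q (by simp)).trans_ssubset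
      (setOf_update_mem_ssubset (by simp) (by simpa using hIp))

/-- Paraconsistency and nonmonotonicity of four-valued minimal entailment with
`𝓘 = {b}`: for distinct atoms `p`, `q` and `Γ = {p, ¬(p ∧ ¬q)}`,
(i) `Γ ⊭_F q`, (ii) `Γ ⊨^{b}_F q`, and (iii) `Γ ∪ {¬q} ⊭^{b}_F q`. -/
theorem F_paraconsistent_nonmonotonic_b (p q : ℕ) (hpq : p ≠ q) :
    ¬ FEntails {FForm.atom p, FForm.neg (FForm.conj (FForm.atom p) (FForm.neg (FForm.atom q)))}
        {FForm.atom q} ∧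
    FMinEntails {V4.b}
        {FForm.atom p, FForm.neg (FForm.conj (FForm.atom p) (FForm.neg (FForm.atom q)))}
        {FForm.atom q} ∧
    ¬ FMinEntails {V4.b}
        ({FForm.atom p, FForm.neg (FForm.conj (FForm.atom p) (FForm.neg (FForm.atom q)))}
          ∪ {FForm.neg (FForm.atom q)})
        {FForm.atom q} := by
  set I₀ : ℕ → V4 := update (fun _ => .f) p .b
  have hI₀p : I₀ p = .b := update_self ..
  have hI₀q : I₀ q = .f := update_of_ne hpq.symm ..
  have hI₀ : IsModelSet I₀
      ({atom p, neg (conj (atom p) (neg (atom q)))} ∪ {neg (atom q)}) := by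
    rw [isModelSet_union, isModelSet_pair_iff]
    simp [IsModelSet, isModel_neg_atom_iff, hI₀p, hI₀q]
  have hI₀_not_q : ¬ IsModel I₀ (atom q) := by simp [IsModel, val, hI₀q]
  have hI₀_b : {r | I₀ r ∈ ({V4.b} : Set V4)} = {p} := by
    ext r
    simp [I₀, update_apply]
  refine ⟨fun h => ?_, fMinEntails_b_pair p q, fun h => ?_⟩
  · obtain ⟨_, rfl, hq⟩ := h I₀ (isModelSet_union.1 hI₀).1
    exact hI₀_not_q hq
  · obtain ⟨_, rfl, hq⟩ := h I₀ <| fMostConsistentModel_of_setOf_eq_singleton hI₀ hI₀_b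
      fun J hJ => (isModelSet_pair_union_neg_atom hJ).elim (⟨p, ·⟩) (⟨q, ·⟩)
    exact hI₀_not_q hq
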